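/- Under the standing assumptions, there exists ε > 0 such that e^{εt} P(X_t(𝟏) ≤ εt) → 0 as t → ∞. -/

import Mathlib

/-!
Formalization of statements from "A version of the classical Pólya urn scheme with
innovations" (Bertoin). The space of colors is a Borel space `S`; after each sampling
of a ball of color `s`, one returns `C` copies of it together with innovation balls
given by a finite point process `ξ`, where `(C, ξ)` has law `P_s`.
-/

open MeasureTheory ProbabilityTheory Filter Set
open scoped ENNReal NNReal Classical

noncomputable section

namespace PolyaUrn

variable {S : Type*} [MeasurableSpace S] {Ω : Type*} [mΩ : MeasurableSpace Ω]

/-- The pairing `ν(f) = ∫_S f dν`. -/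
def pairing (m : Measure S) (f : S → ℝ) : ℝ := ∫ s, f s ∂m

/-- The total mass `ν(𝟏)` of a measure, as a real number. -/
def mass (m : Measure S) : ℝ := (m Set.univ).toReal

/-- The normalized probability measure `ν̄ = ν(𝟏)⁻¹ ν`. -/
def normalize (m : Measure S) : Measure S := (m Set.univ)⁻¹ • m

/-- Bounded measurable real-valued functions (the class `L^∞`). -/
def BddMeas (f : S → ℝ) : Prop := Measurable f ∧ ∃ b : ℝ, ∀ s, |f s| ≤ b

/-- Finite counting measures (finite point configurations) on `S`. -/
def IsCounting (m : Measure S) : Prop :=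
  ∃ (k : ℕ) (z : Fin k → S), m = ∑ i : Fin k, Measure.dirac (z i)

/-- One replacement step of the urn: the sampled ball of color `s` is returned together
with `y.1` further copies of it (`y.1 = -1` meaning that it is removed) and the
innovation balls `y.2`. -/
def step (m : Measure S) (s : S) (y : ℤ × Measure S) : Measure S :=
  (m + y.2 + ((y.1 + 1).toNat • Measure.dirac s)) - Measure.dirac s

/-- The natural (discrete-time) filtration of the urn process. -/
def natFiltD (U : ℕ → Ω → Measure S) (n : ℕ) : MeasurableSpace Ω :=
  ⨆ k ∈ Finset.range (n + 1), MeasurableSpace.comap (U k) inferInstance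

/-- A Pólya urn scheme with innovations, under the standing assumptions (E1)–(E4). -/
structure UrnScheme (S : Type*) [MeasurableSpace S] (Ω : Type*) [mΩ : MeasurableSpace Ω]
    (P : Measure Ω) where
  /-- the replacement kernel: `K s` is the law `P_s` of the pair `(C, ξ)` -/
  K : Kernel S (ℤ × Measure S)
  K_markov : IsMarkovKernel K
  /-- intensity measure of innovations -/
  μ : Measure S
  μ_fin : IsFiniteMeasure μ
  μ_ne : μ ≠ 0
  /-- the modulation function, bounded away from `0` and `∞` -/
  a : S → ℝ
  a_meas : Measurable a
  a_pos : ∃ ε : ℝ, 0 < ε ∧ ∀ s, ε ≤ a s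
  a_bdd : ∃ A : ℝ, ∀ s, a s ≤ A
  /-- the common value `λ₂` of `E_s(C)` -/
  lam2 : ℝ
  /-- (E1): `C ≥ -1`, `ξ` is a finite point process, and `C + ξ(𝟏) ≥ 0`, a.s. -/
  E1 : ∀ s, ∀ᵐ y ∂(K s), -1 ≤ y.1 ∧ IsCounting y.2 ∧ 0 ≤ (y.1 : ℝ) + mass y.2
  /-- (E2): `E_s(C) = λ₂` does not depend on `s` -/
  E2 : ∀ s, ∫ y, ((y.1 : ℝ)) ∂(K s) = lam2
  /-- (E3): `E_s(ξ(f)) = a(s) μ(f)` -/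
  E3 : ∀ s, ∀ f : S → ℝ, BddMeas f → ∫ y, pairing y.2 f ∂(K s) = a s * ∫ x, f x ∂μ
  /-- (E4), lower bound: `inf_s P_s(C + ξ(𝟏) ≥ 1) > 0` -/
  E4lower : ∃ c : ℝ, 0 < c ∧ ∀ s, c ≤ ((K s) {y | 1 ≤ (y.1 : ℝ) + mass y.2}).toReal
  /-- (E4), upper bound: `sup_s E_s((C + ξ(𝟏))²) < ∞` -/
  E4upper : ∃ B : ℝ, ∀ s, ∫ y, ((y.1 : ℝ) + mass y.2) ^ 2 ∂(K s) ≤ B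
  /-- the urn process -/
  U : ℕ → Ω → Measure S
  U_meas : ∀ n, Measurable (U n)
  /-- the initial composition of the urn -/
  m0 : Measure S
  m0_counting : IsCounting m0
  m0_ne : m0 ≠ 0
  U_zero : ∀ ω, U 0 ω = m0
  /-- the urn dynamics: conditionally on `U_0, …, U_n`, a color `s` is sampled according
  to `Ū_n` and an independent replacement `(C, ξ)` with law `P_s` is performed. -/
  dyn : ∀ (n : ℕ) (Φ : Measure S → ℝ), Measurable Φ → (∃ b : ℝ, ∀ m, |Φ m| ≤ b) →
    P[(fun ω => Φ (U (n + 1) ω)) | natFiltD U n] =ᵐ[P]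
      fun ω => ∫ s, (∫ y, Φ (step (U n ω) s y) ∂(K s)) ∂(normalize (U n ω))

namespace UrnScheme

variable {P : Measure Ω} (E : UrnScheme S Ω P)

/-- the eigenvalue `λ₁ = E_s(C) + μ(a)` -/
def lam1 : ℝ := E.lam2 + ∫ s, E.a s ∂E.μ

/-- the ratio `ρ = λ₂/λ₁` -/
def rho : ℝ := E.lam2 / E.lam1

/-- the normalized innovation intensity `μ̄` -/
def barμ : Measure S := normalize E.μ

/-- the quadratic form `σ²(f) = ∫_S E_s(μ̄(f²) C² + ξ(f)²) μ̄(ds)` -/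
def sigmaSq (f : S → ℝ) : ℝ :=
  ∫ s, (∫ y, (∫ x, f x ^ 2 ∂E.barμ) * ((y.1 : ℝ)) ^ 2 + pairing y.2 f ^ 2 ∂(E.K s)) ∂E.barμ

/-- the covariance `E(G(f)G(g)) = ∫_S E_s(μ̄(fg) C² + ξ(f)ξ(g)) μ̄(ds)` of the
Gaussian process `G` -/
def cov (f g : S → ℝ) : ℝ :=
  ∫ s, (∫ y, (∫ x, f x * g x ∂E.barμ) * ((y.1 : ℝ)) ^ 2 +
    pairing y.2 f * pairing y.2 g ∂(E.K s)) ∂E.barμ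

/-- `Q(m, f) = ∫_S m̄(ds) E_s((f(s) C + ξ(f))²)` -/
def Q (m : Measure S) (f : S → ℝ) : ℝ :=
  ∫ s, (∫ y, (f s * (y.1 : ℝ) + pairing y.2 f) ^ 2 ∂(E.K s)) ∂(normalize m)

/-- the strengthened moment assumption (E14): `sup_s E_s((C + ξ(𝟏))^α) < ∞` -/
def E14 (α : ℝ) : Prop := ∃ B : ℝ, ∀ s, ∫ y, |(y.1 : ℝ) + mass y.2| ^ α ∂(E.K s) ≤ B

end UrnScheme

/-- A centered Gaussian process indexed by functions on `S`, with covariance `c`: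
every finite linear combination of its values at bounded measurable functions is a
centered Gaussian random variable with the corresponding variance. -/
def IsCenteredGaussianProcess {Ω' : Type*} [MeasurableSpace Ω'] (P' : Measure Ω')
    (G : (S → ℝ) → Ω' → ℝ) (c : (S → ℝ) → (S → ℝ) → ℝ) : Prop :=
  (∀ f, BddMeas f → Measurable (G f)) ∧
    ∀ (k : ℕ) (f : Fin k → S → ℝ), (∀ i, BddMeas (f i)) → ∀ α : Fin k → ℝ,
      Measure.map (fun ω' => ∑ i, α i * G (f i) ω') P' =
        gaussianReal 0 (Real.toNNReal (∑ i, ∑ j, α i * α j * c (f i) (f j)))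

/-- A continuous-time urn scheme with innovations: the urn scheme together with an
independent standard Poisson process `N` used for the Poisson subordination
`X_t = U_{N(t)}`. -/
structure UrnSchemeCT (S : Type*) [MeasurableSpace S] (Ω : Type*) [mΩ : MeasurableSpace Ω]
    (P : Measure Ω) extends UrnScheme S Ω P where
  /-- the standard Poisson process -/
  N : Ω → ℝ → ℕ
  N_meas : ∀ t, Measurable fun ω => N ω t
  N_zero : ∀ ω, ∀ t ≤ (0 : ℝ), N ω t = 0
  N_mono : ∀ ω, Monotone (N ω)
  N_rightCont : ∀ ω t, ∃ ε > (0 : ℝ), ∀ u ∈ Set.Ico t (t + ε), N ω u = N ω t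
  /-- increments of `N` are Poisson distributed -/
  N_law : ∀ s t : ℝ, 0 ≤ s → s ≤ t →
    Measure.map (fun ω => N ω t - N ω s) P = (poissonPMF (Real.toNNReal (t - s))).toMeasure
  /-- increments of `N` over disjoint intervals are independent -/
  N_indepIncr : ∀ (n : ℕ) (ts : Fin (n + 1) → ℝ), Monotone ts → 0 ≤ ts 0 →
    iIndepFun
      (fun i : Fin n => fun ω => N ω (ts i.succ) - N ω (ts i.castSucc)) P
  /-- `N` is independent of the urn scheme -/
  N_indep_U : Indep (⨆ t : ℝ, MeasurableSpace.comap (fun ω => N ω t) inferInstance)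
      (⨆ n : ℕ, MeasurableSpace.comap (U n) inferInstance) P

namespace UrnSchemeCT

variable {P : Measure Ω} (E : UrnSchemeCT S Ω P)

/-- the continuous-time urn process `X_t = U_{N(t)}` -/
def X (t : ℝ) (ω : Ω) : Measure S := E.U (E.N ω t) ω

/-- the additive functional `∫₀ᵗ dr / X_r(𝟏)` -/
def clock (t : ℝ) (ω : Ω) : ℝ := ∫ r in (0 : ℝ)..t, (mass (E.X r ω))⁻¹

/-- the process `M_t(a) = X_t(a) exp(-λ₁ ∫₀ᵗ dr/X_r(𝟏))` -/
def MA (t : ℝ) (ω : Ω) : ℝ := pairing (E.X t ω) E.a * Real.exp (-E.lam1 * E.clock t ω)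

/-- the process `M_t(f) = X_t(f) exp(-λ₂ ∫₀ᵗ dr/X_r(𝟏))`, relevant when `μ(f) = 0` -/
def MF (f : S → ℝ) (t : ℝ) (ω : Ω) : ℝ :=
  pairing (E.X t ω) f * Real.exp (-E.lam2 * E.clock t ω)

/-- the natural filtration of the continuous-time urn process `X` -/
def filt : Filtration ℝ≥0 mΩ where
  seq t := (⨆ (r : ℝ≥0) (_ : r ≤ t), MeasurableSpace.comap (E.X (r : ℝ)) inferInstance) ⊓ mΩ
  mono' := fun _ _ hij => inf_le_inf
    (iSup₂_le fun r hr => le_iSup₂_of_le r (hr.trans hij) le_rfl) le_rfl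
  le' := fun _ => inf_le_right

/-- the predictable quadratic variation `⟨M(f)⟩_t = ∫₀ᵗ Q(X_r, f) exp(-2λ₂ ∫₀^r du/X_u(𝟏)) dr`
of the martingale `M(f)` (cf. Lemma 3) -/
def bracket (f : S → ℝ) (t : ℝ) (ω : Ω) : ℝ :=
  ∫ r in (0 : ℝ)..t, E.Q (E.X r ω) f * Real.exp (-(2 * E.lam2) * E.clock r ω)

/-- the `k`-th jump time of the Poisson process `N` -/
def gamma (k : ℕ) (ω : Ω) : ℝ := sInf {t : ℝ | k ≤ E.N ω t}

/-- the sum `Σ_{r ≤ t} |ΔM_r(f)|^p` of the `p`-th powers of the jumps of `M(f)`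
up to time `t`; the jump of `M(f)` at the `k`-th sampling time `γ_k` is
`(U_k(f) - U_{k-1}(f)) exp(-λ₂ ∫₀^{γ_k} du/X_u(𝟏))`. -/
def jumpSum (f : S → ℝ) (p : ℝ) (t : ℝ) (ω : Ω) : ℝ≥0∞ :=
  ∑' k : ℕ, if 1 ≤ k ∧ E.gamma k ω ≤ t then
    ENNReal.ofReal ((|pairing (E.U k ω) f - pairing (E.U (k - 1) ω) f| *
      Real.exp (-E.lam2 * E.clock (E.gamma k ω) ω)) ^ p)
  else 0

/-- the total sum `Σ_{t ≥ 0} |ΔM_t(f)|^p` of the `p`-th powers of all jumps of `M(f)` -/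
def jumpSumTotal (f : S → ℝ) (p : ℝ) (ω : Ω) : ℝ≥0∞ :=
  ∑' k : ℕ, if 1 ≤ k then
    ENNReal.ofReal ((|pairing (E.U k ω) f - pairing (E.U (k - 1) ω) f| *
      Real.exp (-E.lam2 * E.clock (E.gamma k ω) ω)) ^ p)
  else 0

/-- the optional quadratic variation `[M(f)]_t`, i.e. the sum of the squared jumps of
`M(f)` up to time `t` -/
def oqv (f : S → ℝ) (t : ℝ) (ω : Ω) : ℝ := (E.jumpSum f 2 t ω).toReal

/-- the Lamperti-type time change `T(t) = inf{r ≥ 0 : ∫₀^r du/X_u(𝟏) > t}` -/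
def TT (t : ℝ) (ω : Ω) : ℝ := sInf {r : ℝ | 0 ≤ r ∧ t < E.clock r ω}

end UrnSchemeCT

/-- A standard real Brownian motion: centered Gaussian independent stationary
increments, continuous paths, started from `0`. -/
def IsBrownian {Ω' : Type*} [MeasurableSpace Ω'] (P' : Measure Ω') (W : ℝ → Ω' → ℝ) : Prop :=
  (∀ t, Measurable (W t)) ∧
  (∀ ω, W 0 ω = 0) ∧
  (∀ᵐ ω ∂P', Continuous fun t => W t ω) ∧
  (∀ s t : ℝ, 0 ≤ s → s ≤ t →
    Measure.map (fun ω => W t ω - W s ω) P' = gaussianReal 0 (Real.toNNReal (t - s))) ∧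
  (∀ (n : ℕ) (ts : Fin (n + 1) → ℝ), Monotone ts → 0 ≤ ts 0 →
    iIndepFun
      (fun i : Fin n => fun ω => W (ts i.succ) ω - W (ts i.castSucc) ω) P')

/-- The Skorokhod `J1` distance between two paths, restricted to the time
interval `[0, T]`: the infimum over time changes `l` (increasing continuous bijections
of `[0, T]` fixing the endpoints) of `max(sup |l(t) - t|, sup |x(l(t)) - y(t)|)`. -/
def skorokhodDistT (T : ℝ) (x y : ℝ → ℝ) : ℝ :=
  ⨅ l : {l : ℝ → ℝ // MonotoneOn l (Set.Icc 0 T) ∧ ContinuousOn l (Set.Icc 0 T) ∧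
      l 0 = 0 ∧ l T = T ∧ Set.BijOn l (Set.Icc 0 T) (Set.Icc 0 T)},
    max (⨆ t ∈ Set.Icc (0 : ℝ) T, |l.1 t - t|) (⨆ t ∈ Set.Icc (0 : ℝ) T, |x (l.1 t) - y t|)

/-- The Skorokhod distance on the path space `D(ℝ₊, ℝ)`. -/
def skorokhodDist (x y : ℝ → ℝ) : ℝ :=
  ∑' m : ℕ, (2 : ℝ)⁻¹ ^ (m + 1) * min 1 (skorokhodDistT (m + 1) x y)

/-- Continuity of a path functional with respect to the Skorokhod topology
on `D(ℝ₊, ℝ)`. -/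
def SkorokhodContinuous (φ : (ℝ → ℝ) → ℝ) : Prop :=
  ∀ (x : ℕ → ℝ → ℝ) (y : ℝ → ℝ), Tendsto (fun n => skorokhodDist (x n) y) atTop (nhds 0) →
    Tendsto (fun n => φ (x n)) atTop (nhds (φ y))

/-!
Each replacement adds `C + ξ(𝟏) ≥ 0` balls, and at least one ball with probability at least
`c > 0` by (E4). Hence `E exp(-U_{n+1}(𝟏)) ≤ ρ E exp(-U_n(𝟏))` with `ρ = 1 - (1 - e⁻¹) c < 1`,
and Markov's inequality gives `P(U_k(𝟏) ≤ r) ≤ e^r ρ^k`. Averaging over the independent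
Poisson variable `N(t)` turns `ρ^k` into `e^{-(1 - ρ) t}`, so `P(X_t(𝟏) ≤ εt) ≤ e^{εt - (1 - ρ) t}`,
which beats `e^{εt}` for `ε = (1 - ρ)/4`.
-/

section

variable {α : Type*} [MeasurableSpace α]

lemma measure_univ_le_sub_dirac_add_one [MeasurableSingletonClass α] (μ : Measure α) (s : α) :
    μ univ ≤ (μ - Measure.dirac s) univ + 1 := by
  -- `μ - ν = sInf {d | μ ≤ d + ν}` is exact only when `ν ≤ μ`, here when `1 ≤ μ {s}`.
  rcases le_total 1 (μ {s}) with h | h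
  · have hle : Measure.dirac s ≤ μ := Measure.le_iff'.2 fun A => by
      by_cases hA : s ∈ A
      · simpa [hA] using h.trans (measure_mono (singleton_subset_iff.2 hA))
      · simp [hA]
    conv_lhs => rw [← Measure.sub_add_cancel_of_le hle]
    simp
  · have hdirac : (Measure.dirac s).restrict {s}ᶜ = 0 := Measure.restrict_eq_zero.2 (by simp)
    have hcompl : (μ - Measure.dirac s).restrict {s}ᶜ = μ.restrict {s}ᶜ := by
      rw [Measure.restrict_sub_eq_restrict_sub_restrict (measurableSet_singleton s).compl,
        hdirac, Measure.sub_zero]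
    have hle : μ {s}ᶜ ≤ (μ - Measure.dirac s) univ :=
      calc μ {s}ᶜ = (μ - Measure.dirac s).restrict {s}ᶜ univ := by simp [hcompl]
        _ ≤ (μ - Measure.dirac s) univ := Measure.restrict_apply_le _ _
    calc μ univ = μ {s}ᶜ + μ {s} := by
          rw [add_comm, measure_add_measure_compl (measurableSet_singleton s)]
      _ ≤ (μ - Measure.dirac s) univ + 1 := add_le_add hle h

lemma integral_le_of_ae_le_of_measure_univ_le_one {ν : Measure α} (hν : ν univ ≤ 1)
    {f : α → ℝ} {b : ℝ} (hb : 0 ≤ b) (hf : ∀ᵐ x ∂ν, f x ≤ b) : ∫ x, f x ∂ν ≤ b := by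
  have : IsFiniteMeasure ν := ⟨hν.trans_lt ENNReal.one_lt_top⟩
  by_cases hint : Integrable f ν
  · calc ∫ x, f x ∂ν ≤ ∫ _, b ∂ν := integral_mono_ae hint (integrable_const b) hf
      _ = ν.real univ * b := by rw [integral_const, smul_eq_mul]
      _ ≤ 1 * b := by
        gcongr
        exact ENNReal.toReal_le_of_le_ofReal zero_le_one (by simpa using hν)
      _ = b := one_mul b
  · rw [integral_undef hint]
    exact hb

lemma integral_exp_neg_le_of_le_measure {ν : Measure α} [IsProbabilityMeasure ν] {Z : α → ℝ}
    (hZ : Measurable Z) (hZ0 : ∀ᵐ x ∂ν, 0 ≤ Z x) {c : ℝ} (hc : c ≤ (ν {x | 1 ≤ Z x}).toReal) :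
    ∫ x, Real.exp (-Z x) ∂ν ≤ 1 - (1 - Real.exp (-1)) * c := by
  set A := {x | 1 ≤ Z x}
  have hA : MeasurableSet A := measurableSet_le measurable_const hZ
  have hq : 0 ≤ 1 - Real.exp (-1) := by
    linarith [Real.exp_le_one_iff.2 (show (-1 : ℝ) ≤ 0 by norm_num)]
  have hbound : ∀ᵐ x ∂ν, Real.exp (-Z x) ≤ 1 - (1 - Real.exp (-1)) * A.indicator 1 x := by
    filter_upwards [hZ0] with x hx
    by_cases hxA : x ∈ A
    · rw [indicator_of_mem hxA, Pi.one_apply, mul_one, sub_sub_cancel]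
      exact Real.exp_le_exp.2 (neg_le_neg hxA)
    · rw [indicator_of_notMem hxA, mul_zero, sub_zero]
      exact Real.exp_le_one_iff.2 (neg_nonpos.2 hx)
  calc ∫ x, Real.exp (-Z x) ∂ν
      ≤ ∫ x, 1 - (1 - Real.exp (-1)) * A.indicator 1 x ∂ν :=
        integral_mono_of_nonneg (ae_of_all _ fun _ => (Real.exp_pos _).le)
          ((integrable_const 1).sub (((integrable_const 1).indicator hA).const_mul _)) hbound
    _ = 1 - (1 - Real.exp (-1)) * (ν A).toReal := by
        rw [integral_sub (integrable_const 1) (((integrable_const 1).indicator hA).const_mul _),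
          integral_const_mul, integral_indicator_one hA]
        simp [measureReal_def]
    _ ≤ 1 - (1 - Real.exp (-1)) * c := by gcongr

lemma hasSum_exp_neg_mul_pow_div_factorial_mul_pow (t x : ℝ) :
    HasSum (fun k : ℕ => Real.exp (-t) * t ^ k / k.factorial * x ^ k)
      (Real.exp (-((1 - x) * t))) := by
  have h := (NormedSpace.expSeries_div_hasSum_exp (t * x)).mul_left (Real.exp (-t))
  rw [← Real.exp_eq_exp_ℝ, ← Real.exp_add] at h
  have hterm : (fun k : ℕ => Real.exp (-t) * t ^ k / k.factorial * x ^ k) =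
      fun k => Real.exp (-t) * ((t * x) ^ k / k.factorial) := funext fun k => by ring
  rw [hterm, show -((1 - x) * t) = -t + t * x by ring]
  exact h

end

lemma measurable_mass : Measurable (mass (S := S)) :=
  (Measure.measurable_coe MeasurableSet.univ).ennreal_toReal

lemma measurable_coe_fst_add_mass_snd :
    Measurable fun y : ℤ × Measure S => (y.1 : ℝ) + mass y.2 :=
  (measurable_from_top.comp measurable_fst).add (measurable_mass.comp measurable_snd)

lemma measurableSet_measure_univ_eq_top : MeasurableSet {m : Measure S | m univ = ∞} :=
  Measure.measurable_coe MeasurableSet.univ (measurableSet_singleton ∞)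

lemma normalize_univ_le_one (m : Measure S) : normalize m univ ≤ 1 := by
  simp [normalize]

lemma IsCounting.measure_univ_ne_top {m : Measure S} (h : IsCounting m) : m univ ≠ ∞ := by
  obtain ⟨k, z, rfl⟩ := h
  simp [Measure.finset_sum_apply]

lemma step_univ_ne_top {m : Measure S} {y : ℤ × Measure S} (hm : m univ ≠ ∞)
    (hy : y.2 univ ≠ ∞) (s : S) : step m s y univ ≠ ∞ :=
  ne_top_of_le_ne_top (by simp [hm, hy]) (Measure.le_iff'.1 Measure.sub_le univ)

lemma mass_add_le_mass_step [MeasurableSingletonClass S] {m : Measure S} {y : ℤ × Measure S}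
    (hm : m univ ≠ ∞) (hy : y.2 univ ≠ ∞) (s : S) :
    mass m + ((y.1 : ℝ) + mass y.2) ≤ mass (step m s y) := by
  have hstep := step_univ_ne_top hm hy s
  have h : (m + y.2 + (y.1 + 1).toNat • Measure.dirac s) univ ≤ step m s y univ + 1 :=
    measure_univ_le_sub_dirac_add_one _ s
  replace h := ENNReal.toReal_mono (ENNReal.add_ne_top.2 ⟨hstep, ENNReal.one_ne_top⟩) h
  simp only [Measure.coe_add, Measure.coe_smul, nsmul_eq_mul, Pi.add_apply, Pi.mul_apply,
    Pi.natCast_apply, measure_univ, mul_one, ne_eq, ENNReal.add_eq_top, hm, hy, or_self,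
    not_false_eq_true, ENNReal.natCast_ne_top, ENNReal.toReal_add, ENNReal.toReal_natCast, hstep,
    ENNReal.one_ne_top, ENNReal.toReal_one] at h
  have hC : (y.1 : ℝ) + 1 ≤ (y.1 + 1).toNat := by exact_mod_cast Int.self_le_toNat _
  unfold mass
  linarith

/-- Set to `0` on infinite measures, where `mass` takes the junk value `0`. -/
def expNegMass (m : Measure S) : ℝ := if m univ = ∞ then 0 else Real.exp (-mass m)

lemma measurable_expNegMass : Measurable (expNegMass (S := S)) :=
  Measurable.ite measurableSet_measure_univ_eq_top measurable_const measurable_mass.neg.exp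

lemma expNegMass_of_ne_top {m : Measure S} (hm : m univ ≠ ∞) :
    expNegMass m = Real.exp (-mass m) :=
  if_neg hm

lemma expNegMass_nonneg (m : Measure S) : 0 ≤ expNegMass m := by
  unfold expNegMass
  split_ifs <;> positivity

lemma expNegMass_le_one (m : Measure S) : expNegMass m ≤ 1 := by
  unfold expNegMass
  split_ifs
  · exact zero_le_one
  · exact Real.exp_le_one_iff.2 (neg_nonpos.2 ENNReal.toReal_nonneg)

lemma abs_expNegMass_le_one (m : Measure S) : |expNegMass m| ≤ 1 := by
  rw [abs_of_nonneg (expNegMass_nonneg m)]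
  exact expNegMass_le_one m

namespace UrnScheme

variable {P : Measure Ω} (E : UrnScheme S Ω P)

lemma integral_comp_U_succ [IsProbabilityMeasure P] {Φ : Measure S → ℝ} (hΦ : Measurable Φ)
    (hΦb : ∃ b : ℝ, ∀ m, |Φ m| ≤ b) (n : ℕ) :
    ∫ ω, Φ (E.U (n + 1) ω) ∂P =
      ∫ ω, ∫ s, ∫ y, Φ (step (E.U n ω) s y) ∂E.K s ∂normalize (E.U n ω) ∂P := by
  rw [← integral_condExp (show natFiltD E.U n ≤ mΩ from iSup₂_le fun k _ => (E.U_meas k).comap_le),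
    integral_congr_ae (E.dyn n Φ hΦ hΦb)]

lemma ae_measure_univ_U_ne_top [IsProbabilityMeasure P] (n : ℕ) :
    ∀ᵐ ω ∂P, E.U n ω univ ≠ ∞ := by
  induction n with
  | zero => exact ae_of_all _ fun ω => E.U_zero ω ▸ E.m0_counting.measure_univ_ne_top
  | succ n ih =>
    let Φ : Measure S → ℝ := fun m => if m univ = ∞ then 1 else 0
    have hΦ : Measurable Φ :=
      Measurable.ite measurableSet_measure_univ_eq_top measurable_const measurable_const
    have hΦ0 : ∀ m, 0 ≤ Φ m := fun m => by unfold Φ; split_ifs <;> norm_num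
    have hΦ1 : ∀ m, |Φ m| ≤ 1 := fun m => by unfold Φ; split_ifs <;> norm_num
    have hzero : ∫ ω, Φ (E.U (n + 1) ω) ∂P = 0 := by
      rw [E.integral_comp_U_succ hΦ ⟨1, hΦ1⟩]
      refine integral_eq_zero_of_ae ?_
      filter_upwards [ih] with ω hω
      have hstep : ∀ s, ∫ y, Φ (step (E.U n ω) s y) ∂E.K s = 0 := fun s =>
        integral_eq_zero_of_ae <| by
          filter_upwards [E.E1 s] with y hy
          simp [Φ, step_univ_ne_top hω hy.2.1.measure_univ_ne_top s]
      simp [hstep]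
    have hint : Integrable (fun ω => Φ (E.U (n + 1) ω)) P :=
      Integrable.of_bound (hΦ.comp (E.U_meas _)).aestronglyMeasurable 1
        (ae_of_all _ fun ω => hΦ1 _)
    filter_upwards [(integral_eq_zero_iff_of_nonneg (fun ω => hΦ0 _) hint).1 hzero] with ω hω
    simpa [Φ] using hω

lemma integrable_expNegMass_U [IsFiniteMeasure P] (n : ℕ) :
    Integrable (fun ω => expNegMass (E.U n ω)) P :=
  Integrable.of_bound (measurable_expNegMass.comp (E.U_meas n)).aestronglyMeasurable 1
    (ae_of_all _ fun _ => abs_expNegMass_le_one _)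

variable [MeasurableSingletonClass S] {ρ : ℝ}
  (hρ : ∀ s, ∫ y, Real.exp (-((y.1 : ℝ) + mass y.2)) ∂E.K s ≤ ρ)
include hρ

lemma integral_expNegMass_step_le {m : Measure S} (hm : m univ ≠ ∞) (s : S) :
    ∫ y, expNegMass (step m s y) ∂E.K s ≤ ρ * expNegMass m := by
  have := E.K_markov
  have hint : Integrable (fun y : ℤ × Measure S => Real.exp (-((y.1 : ℝ) + mass y.2))) (E.K s) :=
    Integrable.of_bound measurable_coe_fst_add_mass_snd.neg.exp.aestronglyMeasurable 1 <| by
      filter_upwards [E.E1 s] with y hy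
      rw [Real.norm_eq_abs, Real.abs_exp]
      exact Real.exp_le_one_iff.2 (by linarith [hy.2.2])
  calc ∫ y, expNegMass (step m s y) ∂E.K s
      ≤ ∫ y, expNegMass m * Real.exp (-((y.1 : ℝ) + mass y.2)) ∂E.K s := by
        refine integral_mono_of_nonneg (ae_of_all _ fun y => expNegMass_nonneg _)
          (hint.const_mul _) ?_
        filter_upwards [E.E1 s] with y hy
        have hξ := hy.2.1.measure_univ_ne_top
        rw [expNegMass_of_ne_top (step_univ_ne_top hm hξ s), expNegMass_of_ne_top hm,
          ← Real.exp_add]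
        exact Real.exp_le_exp.2 (by linarith [mass_add_le_mass_step hm hξ s])
    _ = expNegMass m * ∫ y, Real.exp (-((y.1 : ℝ) + mass y.2)) ∂E.K s := integral_const_mul _ _
    _ ≤ expNegMass m * ρ := mul_le_mul_of_nonneg_left (hρ s) (expNegMass_nonneg m)
    _ = ρ * expNegMass m := mul_comm _ _

lemma integral_expNegMass_U_le [IsProbabilityMeasure P] (hρ0 : 0 ≤ ρ) (n : ℕ) :
    ∫ ω, expNegMass (E.U n ω) ∂P ≤ ρ ^ n := by
  induction n with
  | zero =>
    simpa using integral_le_of_ae_le_of_measure_univ_le_one (ν := P) prob_le_one zero_le_one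
      (ae_of_all _ fun ω => expNegMass_le_one (E.U 0 ω))
  | succ n ih =>
    rw [E.integral_comp_U_succ measurable_expNegMass ⟨1, abs_expNegMass_le_one⟩]
    calc ∫ ω, ∫ s, ∫ y, expNegMass (step (E.U n ω) s y) ∂E.K s ∂normalize (E.U n ω) ∂P
        ≤ ∫ ω, ρ * expNegMass (E.U n ω) ∂P := by
          refine integral_mono_of_nonneg (ae_of_all _ fun ω => integral_nonneg fun s =>
            integral_nonneg fun y => expNegMass_nonneg _)
            ((E.integrable_expNegMass_U n).const_mul ρ) ?_
          filter_upwards [E.ae_measure_univ_U_ne_top n] with ω hω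
          exact integral_le_of_ae_le_of_measure_univ_le_one (normalize_univ_le_one _)
            (mul_nonneg hρ0 (expNegMass_nonneg _))
            (ae_of_all _ fun s => E.integral_expNegMass_step_le hρ hω s)
      _ = ρ * ∫ ω, expNegMass (E.U n ω) ∂P := integral_const_mul _ _
      _ ≤ ρ * ρ ^ n := mul_le_mul_of_nonneg_left ih hρ0
      _ = ρ ^ (n + 1) := (pow_succ' ρ n).symm

lemma measure_mass_U_le_le [IsProbabilityMeasure P] (hρ0 : 0 ≤ ρ) (r : ℝ) (k : ℕ) :
    P {ω | mass (E.U k ω) ≤ r} ≤ ENNReal.ofReal (Real.exp r * ρ ^ k) := by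
  have hsub : {ω | mass (E.U k ω) ≤ r} ≤ᵐ[P] {ω | Real.exp (-r) ≤ expNegMass (E.U k ω)} := by
    filter_upwards [E.ae_measure_univ_U_ne_top k] with ω hω hr
    change Real.exp (-r) ≤ expNegMass (E.U k ω)
    rw [expNegMass_of_ne_top hω]
    exact Real.exp_le_exp.2 (neg_le_neg hr)
  have hmarkov := (mul_meas_ge_le_integral_of_nonneg
    (ae_of_all _ fun ω => expNegMass_nonneg (E.U k ω)) (E.integrable_expNegMass_U k)
    (Real.exp (-r))).trans
    (E.integral_expNegMass_U_le hρ hρ0 k)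
  refine (measure_mono_ae hsub).trans ((ENNReal.le_ofReal_iff_toReal_le (measure_ne_top _ _)
    (by positivity)).2 ?_)
  calc (P {ω | Real.exp (-r) ≤ expNegMass (E.U k ω)}).toReal
      = Real.exp r * (Real.exp (-r) * P.real {ω | Real.exp (-r) ≤ expNegMass (E.U k ω)}) := by
        rw [← mul_assoc, ← Real.exp_add, add_neg_cancel, Real.exp_zero, one_mul, measureReal_def]
    _ ≤ Real.exp r * ρ ^ k := mul_le_mul_of_nonneg_left hmarkov (Real.exp_pos r).le

end UrnScheme

namespace UrnSchemeCT

variable {P : Measure Ω} (E : UrnSchemeCT S Ω P)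

lemma measure_N_eq {t : ℝ} (ht : 0 ≤ t) (k : ℕ) :
    P {ω | E.N ω t = k} = ENNReal.ofReal (Real.exp (-t) * t ^ k / k.factorial) := by
  have hlaw := E.N_law 0 t le_rfl ht
  simp only [E.N_zero _ 0 le_rfl, Nat.sub_zero, sub_zero] at hlaw
  rw [show {ω | E.N ω t = k} = (fun ω => E.N ω t) ⁻¹' {k} from rfl,
    ← Measure.map_apply (E.N_meas t) (measurableSet_singleton k), hlaw,
    PMF.toMeasure_apply_singleton _ _ (measurableSet_singleton k)]
  simp only [poissonPMF, poissonPMFReal, Real.coe_toNNReal _ ht]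
  rfl

lemma measure_X_mem_eq_tsum {B : Set (Measure S)} (hB : MeasurableSet B) (t : ℝ) :
    P {ω | E.X t ω ∈ B} = ∑' k : ℕ, P {ω | E.N ω t = k} * P {ω | E.U k ω ∈ B} := by
  have hdecomp : {ω | E.X t ω ∈ B} = ⋃ k : ℕ, {ω | E.N ω t = k} ∩ {ω | E.U k ω ∈ B} := by
    ext ω
    simp [X]
  rw [hdecomp, measure_iUnion]
  · congr 1
    ext k
    refine (Indep_iff _ _ P).1 E.N_indep_U _ _ ?_ ?_
    · exact le_iSup (fun u : ℝ => MeasurableSpace.comap (fun ω => E.N ω u) inferInstance) t _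
        (comap_measurable _ (measurableSet_singleton k))
    · exact le_iSup (fun n : ℕ => MeasurableSpace.comap (E.U n) inferInstance) k _
        (comap_measurable _ hB)
  · intro i j hij
    exact Disjoint.mono inter_subset_left inter_subset_left
      (disjoint_left.2 fun ω hi hj => hij (hi.symm.trans hj))
  · exact fun k => (E.N_meas t (measurableSet_singleton k)).inter (E.U_meas k hB)

lemma measure_mass_X_le_le [IsProbabilityMeasure P] [MeasurableSingletonClass S] {ρ : ℝ}
    (hρ : ∀ s, ∫ y, Real.exp (-((y.1 : ℝ) + mass y.2)) ∂E.K s ≤ ρ) (hρ0 : 0 ≤ ρ)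
    {t : ℝ} (ht : 0 ≤ t) (r : ℝ) :
    P {ω | mass (E.X t ω) ≤ r} ≤ ENNReal.ofReal (Real.exp (r - (1 - ρ) * t)) := by
  have hsum := (hasSum_exp_neg_mul_pow_div_factorial_mul_pow t ρ).mul_left (Real.exp r)
  rw [← Real.exp_add, ← sub_eq_add_neg] at hsum
  calc P {ω | mass (E.X t ω) ≤ r}
      = ∑' k : ℕ, P {ω | E.N ω t = k} * P {ω | mass (E.U k ω) ≤ r} :=
        E.measure_X_mem_eq_tsum (measurableSet_le measurable_mass measurable_const) t
    _ ≤ ∑' k : ℕ, ENNReal.ofReal (Real.exp (-t) * t ^ k / k.factorial) *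
          ENNReal.ofReal (Real.exp r * ρ ^ k) := by
        gcongr with k
        · exact (E.measure_N_eq ht k).le
        · exact E.toUrnScheme.measure_mass_U_le_le hρ hρ0 r k
    _ = ENNReal.ofReal
          (∑' k : ℕ, Real.exp r * (Real.exp (-t) * t ^ k / k.factorial * ρ ^ k)) := by
        rw [ENNReal.ofReal_tsum_of_nonneg (fun k => by positivity) hsum.summable]
        congr 1
        ext k
        rw [← ENNReal.ofReal_mul (by positivity)]
        ring_nf
    _ = ENNReal.ofReal (Real.exp (r - (1 - ρ) * t)) := by rw [hsum.tsum_eq]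

end UrnSchemeCT

/-- **Lemma 1(ii) (exponential lower bound).** There exists `ε > 0` such that
`e^(εt) P(X_t(𝟏) ≤ εt) → 0` as `t → ∞`. -/
theorem exponential_lower_bound [StandardBorelSpace S] {P : Measure Ω}
    [IsProbabilityMeasure P] (E : UrnSchemeCT S Ω P) :
    ∃ ε : ℝ, 0 < ε ∧ Tendsto
      (fun t : ℝ => Real.exp (ε * t) * (P {ω | mass (E.X t ω) ≤ ε * t}).toReal)
      atTop (nhds 0) := by
  obtain ⟨c₀, hc₀, hK⟩ := E.E4lower
  set ρ := 1 - (1 - Real.exp (-1)) * min c₀ 1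
  have hρ : ∀ s, ∫ y, Real.exp (-((y.1 : ℝ) + mass y.2)) ∂E.K s ≤ ρ := fun s =>
    have := E.K_markov
    integral_exp_neg_le_of_le_measure measurable_coe_fst_add_mass_snd
      ((E.E1 s).mono fun y hy => hy.2.2) ((min_le_left _ _).trans (hK s))
  have he : 0 < Real.exp (-1) ∧ Real.exp (-1) < 1 :=
    ⟨Real.exp_pos _, Real.exp_lt_one_iff.2 (by norm_num)⟩
  have hc : 0 < min c₀ 1 ∧ min c₀ 1 ≤ 1 := ⟨lt_min hc₀ one_pos, min_le_right _ _⟩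
  have hρ0 : 0 ≤ ρ := by nlinarith
  have hρ1 : ρ < 1 := by nlinarith
  refine ⟨(1 - ρ) / 4, by linarith, squeeze_zero' (.of_forall fun t => by positivity) ?_
    (Real.tendsto_exp_neg_atTop_nhds_zero.comp
      (tendsto_id.const_mul_atTop (show 0 < (1 - ρ) / 2 by linarith)))⟩
  filter_upwards [eventually_ge_atTop 0] with t ht
  have hX := ENNReal.toReal_le_of_le_ofReal (Real.exp_pos _).le
    (E.measure_mass_X_le_le hρ hρ0 ht ((1 - ρ) / 4 * t))
  calc Real.exp ((1 - ρ) / 4 * t) * (P {ω | mass (E.X t ω) ≤ (1 - ρ) / 4 * t}).toReal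
      ≤ Real.exp ((1 - ρ) / 4 * t) * Real.exp ((1 - ρ) / 4 * t - (1 - ρ) * t) := by gcongr
    _ = Real.exp (-((1 - ρ) / 2 * t)) := by
        rw [← Real.exp_add]
        ring_nf

end PolyaUrn
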